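/- Let R be a ring and M a right R-module which is a generator; let W = End_R(M) and let α be an anti-endomorphism of W. If α is injective, then b_α is left injective. If α is bijective, then b_α is both right and left regular. -/

import Mathlib

open MulOpposite TensorProduct Function

universe u v w v'

section Core

/-- An anti-endomorphism of a ring: additive, unital, reverses multiplication. -/
def IsAntiEndo {W : Type*} [Ring W] (α : W → W) : Prop :=
  (∀ u v : W, α (u + v) = α u + α v) ∧ α 1 = 1 ∧ ∀ u v : W, α (u * v) = α v * α u

/-- An anti-automorphism of a ring: a bijective anti-endomorphism. -/
def IsAntiAuto {W : Type*} [Ring W] (α : W → W) : Prop :=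
  IsAntiEndo α ∧ Function.Bijective α

/-- An inner automorphism of a ring: conjugation by a unit. -/
def IsInnerAut {W : Type*} [Ring W] (φ : W → W) : Prop :=
  ∃ u : Wˣ, ∀ w : W, φ w = ↑u * w * ↑u⁻¹

variable (R : Type u) [Ring R]

/-- A double `R`-module structure on the additive group `K`: two commuting
right `R`-module structures `m0` and `m1`. -/
structure DoubleModule (K : Type v) [AddCommGroup K] where
  m0 : K → R → K
  m1 : K → R → K
  m0_add_left : ∀ (k k' : K) (r : R), m0 (k + k') r = m0 k r + m0 k' r
  m0_add_right : ∀ (k : K) (r r' : R), m0 k (r + r') = m0 k r + m0 k r'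
  m0_mul : ∀ (k : K) (r r' : R), m0 k (r * r') = m0 (m0 k r) r'
  m0_one : ∀ k : K, m0 k 1 = k
  m1_add_left : ∀ (k k' : K) (r : R), m1 (k + k') r = m1 k r + m1 k' r
  m1_add_right : ∀ (k : K) (r r' : R), m1 k (r + r') = m1 k r + m1 k r'
  m1_mul : ∀ (k : K) (r r' : R), m1 k (r * r') = m1 (m1 k r) r'
  m1_one : ∀ k : K, m1 k 1 = k
  comm : ∀ (k : K) (a b : R), m1 (m0 k a) b = m0 (m1 k b) a

variable {R}

/-- A homomorphism of double `R`-modules. -/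
def IsDoubleHom {K : Type v} {K' : Type w} [AddCommGroup K] [AddCommGroup K']
    (DK : DoubleModule R K) (DK' : DoubleModule R K') (f : K → K') : Prop :=
  (∀ k k' : K, f (k + k') = f k + f k') ∧
  (∀ (k : K) (r : R), f (DK.m0 k r) = DK'.m0 (f k) r) ∧
  (∀ (k : K) (r : R), f (DK.m1 k r) = DK'.m1 (f k) r)

/-- An isomorphism of double `R`-modules. -/
def IsDoubleIso {K : Type v} {K' : Type w} [AddCommGroup K] [AddCommGroup K']
    (DK : DoubleModule R K) (DK' : DoubleModule R K') (f : K → K') : Prop :=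
  IsDoubleHom DK DK' f ∧ Function.Bijective f

/-- An anti-automorphism of a double `R`-module: an additive bijection exchanging
the two module structures. -/
def IsDoubleAntiAuto {K : Type v} [AddCommGroup K] (DK : DoubleModule R K) (θ : K → K) : Prop :=
  Function.Bijective θ ∧ (∀ k k' : K, θ (k + k') = θ k + θ k') ∧
  (∀ (k : K) (r : R), θ (DK.m0 k r) = DK.m1 (θ k) r) ∧
  (∀ (k : K) (r : R), θ (DK.m1 k r) = DK.m0 (θ k) r)

variable (R)

/-- A general bilinear form on a right `R`-module `M` (encoded as a module over `Rᵐᵒᵖ`)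
with values in a double `R`-module `(K, DK)`. -/
structure GBF (M : Type v) [AddCommGroup M] [Module Rᵐᵒᵖ M]
    (K : Type w) [AddCommGroup K] (DK : DoubleModule R K) where
  b : M → M → K
  add_left : ∀ x x' y : M, b (x + x') y = b x y + b x' y
  add_right : ∀ x y y' : M, b x (y + y') = b x y + b x y'
  smul_left : ∀ (x y : M) (r : R), b (op r • x) y = DK.m0 (b x y) r
  smul_right : ∀ (x y : M) (r : R), b x (op r • y) = DK.m1 (b x y) r

variable {R}

namespace GBF

variable {M : Type v} [AddCommGroup M] [Module Rᵐᵒᵖ M]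
  {K : Type w} [AddCommGroup K] {DK : DoubleModule R K}

/-- The right adjoint of `β` is injective. -/
def RightInjective (β : GBF R M K DK) : Prop :=
  ∀ x x' : M, (∀ y : M, β.b y x = β.b y x') → x = x'

/-- The right adjoint of `β` is bijective onto `Hom_R(M, K₀)`. -/
def RightRegular (β : GBF R M K DK) : Prop :=
  β.RightInjective ∧
  ∀ f : M → K, (∀ y y' : M, f (y + y') = f y + f y') →
    (∀ (y : M) (r : R), f (op r • y) = DK.m0 (f y) r) →
    ∃ x : M, ∀ y : M, f y = β.b y x

/-- The left adjoint of `β` is injective. -/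
def LeftInjective (β : GBF R M K DK) : Prop :=
  ∀ x x' : M, (∀ y : M, β.b x y = β.b x' y) → x = x'

/-- The left adjoint of `β` is bijective onto `Hom_R(M, K₁)`. -/
def LeftRegular (β : GBF R M K DK) : Prop :=
  β.LeftInjective ∧
  ∀ f : M → K, (∀ y y' : M, f (y + y') = f y + f y') →
    (∀ (y : M) (r : R), f (op r • y) = DK.m1 (f y) r) →
    ∃ x : M, ∀ y : M, f y = β.b x y

/-- `α` is an adjoint anti-endomorphism for `β`: `β(w x, y) = β(x, α(w) y)`. -/
def IsAdjoint (β : GBF R M K DK) (α : Module.End Rᵐᵒᵖ M → Module.End Rᵐᵒᵖ M) : Prop :=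
  ∀ (w : Module.End Rᵐᵒᵖ M) (x y : M), β.b (w x) y = β.b x (α w y)

/-- Similarity of general bilinear forms on the same module. -/
def Similar {K' : Type v'} [AddCommGroup K'] {DK' : DoubleModule R K'}
    (β : GBF R M K DK) (β' : GBF R M K' DK') : Prop :=
  ∃ f : K → K', IsDoubleIso DK DK' f ∧ ∀ x y : M, β'.b x y = f (β.b x y)

end GBF

section Kalpha

variable {M : Type v} [AddCommGroup M] [Module Rᵐᵒᵖ M]

/-- The subgroup of `M ⊗_ℤ M` generated by the elements `(w x) ⊗ y - x ⊗ (α w y)`. -/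
def kalphaRel (α : Module.End Rᵐᵒᵖ M → Module.End Rᵐᵒᵖ M) : Submodule ℤ (M ⊗[ℤ] M) :=
  Submodule.span ℤ
    {z | ∃ (w : Module.End Rᵐᵒᵖ M) (x y : M), z = (w x) ⊗ₜ[ℤ] y - x ⊗ₜ[ℤ] (α w y)}

/-- `K_α`, the quotient of `M ⊗_ℤ M` by the relations `(w x) ⊗ y = x ⊗ (α w y)`. -/
abbrev Kalpha (α : Module.End Rᵐᵒᵖ M → Module.End Rᵐᵒᵖ M) : Type _ :=
  (M ⊗[ℤ] M) ⧸ kalphaRel α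

/-- The map `x ⊗ y ↦ (x·r) ⊗ y` on `M ⊗_ℤ M`. -/
noncomputable def smulLeftMap (r : R) : (M ⊗[ℤ] M) →ₗ[ℤ] (M ⊗[ℤ] M) :=
  TensorProduct.map ((DistribMulAction.toAddMonoidHom M (op r : Rᵐᵒᵖ)).toIntLinearMap)
    LinearMap.id

/-- The map `x ⊗ y ↦ x ⊗ (y·r)` on `M ⊗_ℤ M`. -/
noncomputable def smulRightMap (r : R) : (M ⊗[ℤ] M) →ₗ[ℤ] (M ⊗[ℤ] M) :=
  TensorProduct.map LinearMap.id
    ((DistribMulAction.toAddMonoidHom M (op r : Rᵐᵒᵖ)).toIntLinearMap)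

theorem smulLeftMap_tmul (r : R) (x y : M) :
    smulLeftMap (M := M) r (x ⊗ₜ[ℤ] y) = (op r • x) ⊗ₜ[ℤ] y := rfl

theorem smulRightMap_tmul (r : R) (x y : M) :
    smulRightMap (M := M) r (x ⊗ₜ[ℤ] y) = x ⊗ₜ[ℤ] (op r • y) := rfl

theorem kalphaRel_le_left (α : Module.End Rᵐᵒᵖ M → Module.End Rᵐᵒᵖ M) (r : R) :
    kalphaRel α ≤ (kalphaRel α).comap (smulLeftMap (M := M) r) := by
  rw [kalphaRel, Submodule.span_le]
  rintro _ ⟨w, x, y, rfl⟩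
  rw [SetLike.mem_coe, Submodule.mem_comap, map_sub]
  have h1 : smulLeftMap (M := M) r ((w x) ⊗ₜ[ℤ] y) = (w (op r • x)) ⊗ₜ[ℤ] y := by
    rw [smulLeftMap_tmul, map_smul]
  have h2 : smulLeftMap (M := M) r (x ⊗ₜ[ℤ] (α w y)) = (op r • x) ⊗ₜ[ℤ] (α w y) := by
    rw [smulLeftMap_tmul]
  rw [h1, h2]
  exact Submodule.subset_span ⟨w, op r • x, y, rfl⟩

theorem kalphaRel_le_right (α : Module.End Rᵐᵒᵖ M → Module.End Rᵐᵒᵖ M) (r : R) :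
    kalphaRel α ≤ (kalphaRel α).comap (smulRightMap (M := M) r) := by
  rw [kalphaRel, Submodule.span_le]
  rintro _ ⟨w, x, y, rfl⟩
  rw [SetLike.mem_coe, Submodule.mem_comap, map_sub]
  have h1 : smulRightMap (M := M) r ((w x) ⊗ₜ[ℤ] y) = (w x) ⊗ₜ[ℤ] (op r • y) := by
    rw [smulRightMap_tmul]
  have h2 : smulRightMap (M := M) r (x ⊗ₜ[ℤ] (α w y)) = x ⊗ₜ[ℤ] (α w (op r • y)) := by
    rw [smulRightMap_tmul, map_smul]
  rw [h1, h2]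
  exact Submodule.subset_span ⟨w, x, op r • y, rfl⟩

/-- The `m0`-action on `K_α`. -/
noncomputable def kSmul0 (α : Module.End Rᵐᵒᵖ M → Module.End Rᵐᵒᵖ M) (r : R) :
    Kalpha α →ₗ[ℤ] Kalpha α :=
  Submodule.mapQ _ _ (smulLeftMap r) (kalphaRel_le_left α r)

/-- The `m1`-action on `K_α`. -/
noncomputable def kSmul1 (α : Module.End Rᵐᵒᵖ M → Module.End Rᵐᵒᵖ M) (r : R) :
    Kalpha α →ₗ[ℤ] Kalpha α :=
  Submodule.mapQ _ _ (smulRightMap r) (kalphaRel_le_right α r)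

theorem kSmul0_mk (α : Module.End Rᵐᵒᵖ M → Module.End Rᵐᵒᵖ M) (r : R) (t : M ⊗[ℤ] M) :
    kSmul0 α r (Submodule.Quotient.mk t) = Submodule.Quotient.mk (smulLeftMap r t) := rfl

theorem kSmul1_mk (α : Module.End Rᵐᵒᵖ M → Module.End Rᵐᵒᵖ M) (r : R) (t : M ⊗[ℤ] M) :
    kSmul1 α r (Submodule.Quotient.mk t) = Submodule.Quotient.mk (smulRightMap r t) := rfl

/-- The double `R`-module structure on `K_α`. -/
noncomputable def KalphaDM (α : Module.End Rᵐᵒᵖ M → Module.End Rᵐᵒᵖ M) :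
    DoubleModule R (Kalpha α) where
  m0 k r := kSmul0 α r k
  m1 k r := kSmul1 α r k
  m0_add_left k k' r := map_add _ k k'
  m0_add_right := by
    intro k r r'
    induction k using Submodule.Quotient.induction_on with
    | _ t =>
      rw [kSmul0_mk, kSmul0_mk, kSmul0_mk, ← Submodule.Quotient.mk_add]
      congr 1
      induction t with
      | zero => simp
      | tmul x y => simp [smulLeftMap_tmul, op_add, add_smul, TensorProduct.add_tmul]
      | add a b ha hb => rw [map_add, map_add, map_add, ha, hb]; abel
  m0_mul := by
    intro k r r'
    induction k using Submodule.Quotient.induction_on with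
    | _ t =>
      rw [kSmul0_mk, kSmul0_mk, kSmul0_mk]
      congr 1
      induction t with
      | zero => simp
      | tmul x y => simp [smulLeftMap_tmul, op_mul, mul_smul]
      | add a b ha hb => rw [map_add, map_add, map_add, ha, hb]
  m0_one := by
    intro k
    induction k using Submodule.Quotient.induction_on with
    | _ t =>
      rw [kSmul0_mk]
      congr 1
      induction t with
      | zero => simp
      | tmul x y => simp [smulLeftMap_tmul]
      | add a b ha hb => rw [map_add, ha, hb]
  m1_add_left k k' r := map_add _ k k'
  m1_add_right := by
    intro k r r'
    induction k using Submodule.Quotient.induction_on with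
    | _ t =>
      rw [kSmul1_mk, kSmul1_mk, kSmul1_mk, ← Submodule.Quotient.mk_add]
      congr 1
      induction t with
      | zero => simp
      | tmul x y => simp [smulRightMap_tmul, op_add, add_smul, TensorProduct.tmul_add]
      | add a b ha hb => rw [map_add, map_add, map_add, ha, hb]; abel
  m1_mul := by
    intro k r r'
    induction k using Submodule.Quotient.induction_on with
    | _ t =>
      rw [kSmul1_mk, kSmul1_mk, kSmul1_mk]
      congr 1
      induction t with
      | zero => simp
      | tmul x y => simp [smulRightMap_tmul, op_mul, mul_smul]
      | add a b ha hb => rw [map_add, map_add, map_add, ha, hb]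
  m1_one := by
    intro k
    induction k using Submodule.Quotient.induction_on with
    | _ t =>
      rw [kSmul1_mk]
      congr 1
      induction t with
      | zero => simp
      | tmul x y => simp [smulRightMap_tmul]
      | add a b ha hb => rw [map_add, ha, hb]
  comm := by
    intro k a c
    induction k using Submodule.Quotient.induction_on with
    | _ t =>
      rw [kSmul0_mk, kSmul1_mk, kSmul1_mk, kSmul0_mk]
      congr 1
      induction t with
      | zero => simp
      | tmul x y => simp [smulLeftMap_tmul, smulRightMap_tmul]
      | add p q hp hq => rw [map_add, map_add, map_add, map_add, hp, hq]

/-- The universal general bilinear form `b_α : M × M → K_α`. -/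
noncomputable def balpha (α : Module.End Rᵐᵒᵖ M → Module.End Rᵐᵒᵖ M) :
    GBF R M (Kalpha α) (KalphaDM α) where
  b x y := Submodule.Quotient.mk (x ⊗ₜ[ℤ] y)
  add_left x x' y := by
    rw [TensorProduct.add_tmul, Submodule.Quotient.mk_add]
  add_right x y y' := by
    rw [TensorProduct.tmul_add, Submodule.Quotient.mk_add]
  smul_left x y r := by
    show _ = kSmul0 α r (Submodule.Quotient.mk (x ⊗ₜ[ℤ] y))
    rw [kSmul0_mk]
    congr 1
  smul_right x y r := by
    show _ = kSmul1 α r (Submodule.Quotient.mk (x ⊗ₜ[ℤ] y))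
    rw [kSmul1_mk]
    congr 1

end Kalpha

end Core

/-- `M` is a generator of `Mod-R`: `R_R` is a direct summand of `Mⁿ` for some `n ∈ ℕ`. -/
def IsGenerator (R : Type u) [Ring R] (M : Type v) [AddCommGroup M] [Module Rᵐᵒᵖ M] : Prop :=
  ∃ (n : ℕ) (i : R →ₗ[Rᵐᵒᵖ] (Fin n → M)) (p : (Fin n → M) →ₗ[Rᵐᵒᵖ] R), ∀ r : R, p (i r) = r

/-! Since `M` is a generator there are `e j ∈ M` and `g j ∈ Hom_R(M, R)` with `∑ g j (e j) = 1`,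
hence `x = ∑ x · g j (e j)` for every `x`. For `g ∈ Hom_R(M, R)` the assignment
`x ⊗ y ↦ α(x · g(-)) y` is well defined on `K_α`, because `w ∘ (x · g(-)) = (w x) · g(-)` and `α`
reverses products. These contractions separate points of `M` once `α` is injective, and they
reconstruct every `k ∈ K_α` as `∑ e j ⊗ contract (g j) k`, which yields left surjectivity once `α`
is surjective. When `α` is bijective, `x ⊗ y ↦ y ⊗ x` identifies `K_α` with `K_{α⁻¹}`, exchanging
the two module structures, so right regularity of `b_α` is left regularity of `b_{α⁻¹}`. -/

theorem IsAntiEndo.of_inverse {W : Type*} [Ring W] {α β : W → W} (hα : IsAntiEndo α)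
    (hβα : LeftInverse β α) (hαβ : RightInverse β α) : IsAntiEndo β :=
  ⟨fun u v => hβα.injective (by rw [hα.1, hαβ, hαβ, hαβ]),
    by simpa only [hα.2.1] using hβα 1,
    fun u v => hβα.injective (by rw [hα.2.2, hαβ, hαβ, hαβ])⟩

section RankOne

variable {R : Type*} [Ring R] {M : Type*} [AddCommGroup M] [Module Rᵐᵒᵖ M]

def rankOneEnd (x : M) (g : M →ₗ[Rᵐᵒᵖ] R) : Module.End Rᵐᵒᵖ M where
  toFun m := op (g m) • x
  map_add' m m' := by rw [map_add, op_add, add_smul]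
  map_smul' r m := by
    rw [map_smul, RingHom.id_apply, ← op_unop r, op_smul_eq_mul, op_mul, op_unop, mul_smul]

@[simp]
theorem rankOneEnd_apply (x : M) (g : M →ₗ[Rᵐᵒᵖ] R) (m : M) :
    rankOneEnd x g m = op (g m) • x := rfl

theorem mul_rankOneEnd (w : Module.End Rᵐᵒᵖ M) (x : M) (g : M →ₗ[Rᵐᵒᵖ] R) :
    w * rankOneEnd x g = rankOneEnd (w x) g := by
  ext m
  exact map_smul w _ x

def rankOneEndₗ (g : M →ₗ[Rᵐᵒᵖ] R) : M →ₗ[ℤ] Module.End Rᵐᵒᵖ M where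
  toFun x := rankOneEnd x g
  map_add' x x' := by ext m; exact smul_add _ x x'
  map_smul' n x := by ext m; exact smul_comm _ n x

theorem sum_rankOneEnd_apply {n : ℕ} {e : Fin n → M} {g : Fin n → M →ₗ[Rᵐᵒᵖ] R}
    (he : ∑ j, g j (e j) = 1) (x : M) : ∑ j, rankOneEnd x (g j) (e j) = x := by
  simp only [rankOneEnd_apply, ← Finset.sum_smul, ← Finset.op_sum, he, op_one, one_smul]

end RankOne

theorem IsGenerator.exists_sum_eq_one {R : Type*} [Ring R] {M : Type*} [AddCommGroup M]
    [Module Rᵐᵒᵖ M] (hgen : IsGenerator R M) :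
    ∃ (n : ℕ) (e : Fin n → M) (g : Fin n → M →ₗ[Rᵐᵒᵖ] R), ∑ j, g j (e j) = 1 := by
  obtain ⟨n, i, p, hp⟩ := hgen
  refine ⟨n, i 1, fun j => p ∘ₗ LinearMap.single Rᵐᵒᵖ (fun _ => M) j, ?_⟩
  simp only [LinearMap.comp_apply, ← map_sum, LinearMap.coe_single, Finset.univ_sum_single, hp]

namespace Kalpha

variable {R : Type*} [Ring R] {M : Type*} [AddCommGroup M] [Module Rᵐᵒᵖ M]
  {α β : Module.End Rᵐᵒᵖ M → Module.End Rᵐᵒᵖ M}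

theorem balpha_isAdjoint (α : Module.End Rᵐᵒᵖ M → Module.End Rᵐᵒᵖ M) :
    (balpha α).IsAdjoint α := fun w x y =>
  (Submodule.Quotient.eq _).mpr (Submodule.subset_span ⟨w, x, y, rfl⟩)

theorem balpha_sum_left {ι : Type*} (s : Finset ι) (x : ι → M) (y : M) :
    (balpha α).b (∑ i ∈ s, x i) y = ∑ i ∈ s, (balpha α).b (x i) y := by
  simp only [balpha, TensorProduct.sum_tmul, ← Submodule.mkQ_apply, map_sum]

theorem linearMap_ext {N : Type*} [AddCommGroup N] {f f' : Kalpha α →ₗ[ℤ] N}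
    (h : ∀ x y, f ((balpha α).b x y) = f' ((balpha α).b x y)) : f = f' :=
  Submodule.linearMap_qext _ (TensorProduct.ext' h)

def lift {N : Type*} [AddCommGroup N] (φ : M →ₗ[ℤ] M →ₗ[ℤ] N)
    (hφ : ∀ w x y, φ (w x) y = φ x (α w y)) : Kalpha α →ₗ[ℤ] N :=
  (kalphaRel α).liftQ (TensorProduct.lift φ) <| Submodule.span_le.mpr <| by
    rintro _ ⟨w, x, y, rfl⟩
    have h := (TensorProduct.lift φ).map_sub (w x ⊗ₜ y) (x ⊗ₜ α w y)
    rw [TensorProduct.lift.tmul, TensorProduct.lift.tmul, hφ, sub_self] at h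
    exact h

def balphaBilin (α : Module.End Rᵐᵒᵖ M → Module.End Rᵐᵒᵖ M) : M →ₗ[ℤ] M →ₗ[ℤ] Kalpha α :=
  (TensorProduct.mk ℤ M M).compr₂ (kalphaRel α).mkQ

def transpose (hβα : LeftInverse β α) : Kalpha α →ₗ[ℤ] Kalpha β :=
  lift (balphaBilin β).flip fun w x y => by
    show (balpha β).b y (w x) = (balpha β).b (α w y) x
    rw [balpha_isAdjoint, hβα]

theorem transpose_balpha (hβα : LeftInverse β α) (x y : M) :
    transpose hβα ((balpha α).b x y) = (balpha β).b y x := rfl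

theorem transpose_transpose (hβα : LeftInverse β α) (hαβ : RightInverse β α) (k : Kalpha α) :
    transpose hαβ (transpose hβα k) = k :=
  LinearMap.congr_fun (linearMap_ext (f := transpose hαβ ∘ₗ transpose hβα) (f' := .id)
    fun _ _ => rfl) k

theorem transpose_kSmul0 (hβα : LeftInverse β α) (r : R) (k : Kalpha α) :
    transpose hβα (kSmul0 α r k) = kSmul1 β r (transpose hβα k) :=
  LinearMap.congr_fun (linearMap_ext (f := transpose hβα ∘ₗ kSmul0 α r)
    (f' := kSmul1 β r ∘ₗ transpose hβα) fun x y => by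
      change transpose hβα ((KalphaDM α).m0 ((balpha α).b x y) r) =
        (KalphaDM β).m1 ((balpha β).b y x) r
      rw [← (balpha α).smul_left, ← (balpha β).smul_right]
      rfl) k

def contract (hα : IsAntiEndo α) (g : M →ₗ[Rᵐᵒᵖ] R) : Kalpha α →ₗ[ℤ] M :=
  lift (LinearMap.restrictScalarsₗ ℤ Rᵐᵒᵖ M M ℤ ∘ₗ (AddMonoidHom.mk' α hα.1).toIntLinearMap ∘ₗ
      rankOneEndₗ g) fun w x y => by
    show α (rankOneEnd (w x) g) y = α (rankOneEnd x g) (α w y)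
    rw [← mul_rankOneEnd, hα.2.2, Module.End.mul_apply]

theorem contract_kSmul1 (hα : IsAntiEndo α) (g : M →ₗ[Rᵐᵒᵖ] R) (r : R) (k : Kalpha α) :
    contract hα g (kSmul1 α r k) = op r • contract hα g k :=
  LinearMap.congr_fun (linearMap_ext (f := contract hα g ∘ₗ kSmul1 α r)
    (f' := op r • contract hα g) fun x y => map_smul (α (rankOneEnd x g)) (op r) y) k

theorem sum_balpha_contract (hα : IsAntiEndo α) {n : ℕ} {e : Fin n → M}
    {g : Fin n → M →ₗ[Rᵐᵒᵖ] R} (he : ∑ j, g j (e j) = 1) (k : Kalpha α) :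
    ∑ j, (balpha α).b (e j) (contract hα (g j) k) = k := by
  have key : ∑ j, balphaBilin α (e j) ∘ₗ contract hα (g j) = .id := linearMap_ext fun x y => by
    rw [LinearMap.sum_apply, LinearMap.id_apply]
    calc ∑ j, (balpha α).b (e j) (α (rankOneEnd x (g j)) y)
        = ∑ j, (balpha α).b (rankOneEnd x (g j) (e j)) y :=
          Finset.sum_congr rfl fun j _ => (balpha_isAdjoint α _ _ _).symm
      _ = (balpha α).b x y := by rw [← balpha_sum_left, sum_rankOneEnd_apply he]
  exact (LinearMap.sum_apply _ _ _).symm.trans (LinearMap.congr_fun key k)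

end Kalpha

open Kalpha

theorem balpha_leftInjective {R : Type*} [Ring R] {M : Type*} [AddCommGroup M]
    [Module Rᵐᵒᵖ M] (hgen : IsGenerator R M) {α : Module.End Rᵐᵒᵖ M → Module.End Rᵐᵒᵖ M}
    (hα : IsAntiEndo α) (hinj : Injective α) : (balpha α).LeftInjective := by
  obtain ⟨n, e, g, he⟩ := hgen.exists_sum_eq_one
  intro x x' h
  have hrank : ∀ j, rankOneEnd x (g j) = rankOneEnd x' (g j) := fun j =>
    hinj (LinearMap.ext fun y => congrArg (contract hα (g j)) (h y))
  rw [← sum_rankOneEnd_apply he x, ← sum_rankOneEnd_apply he x']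
  simp only [hrank]

theorem balpha_leftRegular {R : Type*} [Ring R] {M : Type*} [AddCommGroup M]
    [Module Rᵐᵒᵖ M] (hgen : IsGenerator R M) {α : Module.End Rᵐᵒᵖ M → Module.End Rᵐᵒᵖ M}
    (hα : IsAntiEndo α) (hbij : Bijective α) : (balpha α).LeftRegular := by
  refine ⟨balpha_leftInjective hgen hα hbij.1, fun f hadd hsmul => ?_⟩
  obtain ⟨n, e, g, he⟩ := hgen.exists_sum_eq_one
  obtain ⟨β, hαβ⟩ := hbij.2.hasRightInverse
  let w (j : Fin n) : Module.End Rᵐᵒᵖ M :=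
    { toFun y := contract hα (g j) (f y)
      map_add' y y' := by rw [hadd, map_add]
      map_smul' r y := by
        rw [← op_unop r, hsmul]
        exact contract_kSmul1 hα (g j) _ (f y) }
  refine ⟨∑ j, β (w j) (e j), fun y => ?_⟩
  calc f y = ∑ j, (balpha α).b (e j) (w j y) := (sum_balpha_contract hα he _).symm
    _ = ∑ j, (balpha α).b (e j) (α (β (w j)) y) := by simp only [hαβ _]
    _ = (balpha α).b (∑ j, β (w j) (e j)) y := by
      rw [balpha_sum_left]
      exact Finset.sum_congr rfl fun j _ => (balpha_isAdjoint α _ _ _).symm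

namespace GBF

variable {R : Type*} [Ring R] {M : Type*} [AddCommGroup M] [Module Rᵐᵒᵖ M]
  {K : Type*} [AddCommGroup K] {DK : DoubleModule R K}
  {K' : Type*} [AddCommGroup K'] {DK' : DoubleModule R K'}

theorem rightRegular_of_leftRegular {β : GBF R M K DK} {β' : GBF R M K' DK'} {θ : K → K'}
    (hθ : Injective θ) (hθ_add : ∀ k k', θ (k + k') = θ k + θ k')
    (hθ_smul : ∀ k r, θ (DK.m0 k r) = DK'.m1 (θ k) r) (hθβ : ∀ x y, θ (β.b x y) = β'.b y x)
    (h : β'.LeftRegular) : β.RightRegular := by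
  refine ⟨fun x x' hx => h.1 x x' fun y => by rw [← hθβ, ← hθβ, hx], fun f hadd hsmul => ?_⟩
  obtain ⟨x, hx⟩ := h.2 (θ ∘ f) (fun y y' => by simp only [comp_apply, hadd, hθ_add])
    (fun y r => by simp only [comp_apply, hsmul, hθ_smul])
  exact ⟨x, fun y => hθ ((hx y).trans (hθβ y x).symm)⟩

end GBF

/-- If `M` is a generator and `α` is an anti-endomorphism of `End_R(M)`,
then: if `α` is injective, `b_α` is left injective; if `α` is bijective, `b_α` is right and
left regular. -/
theorem stmt_15 {R : Type u} [Ring R] {M : Type v} [AddCommGroup M] [Module Rᵐᵒᵖ M]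
    (hgen : IsGenerator R M)
    (α : Module.End Rᵐᵒᵖ M → Module.End Rᵐᵒᵖ M) (hα : IsAntiEndo α) :
    (Function.Injective α → (balpha (M := M) α).LeftInjective) ∧
    (Function.Bijective α →
      (balpha (M := M) α).RightRegular ∧ (balpha (M := M) α).LeftRegular) := by
  refine ⟨balpha_leftInjective hgen hα, fun hbij => ⟨?_, balpha_leftRegular hgen hα hbij⟩⟩
  obtain ⟨β, hβα, hαβ⟩ := bijective_iff_has_inverse.mp hbij
  have hβ : IsAntiEndo β := hα.of_inverse hβα hαβ
  exact GBF.rightRegular_of_leftRegular (θ := transpose hβα) (β' := balpha β)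
    (LeftInverse.injective (transpose_transpose hβα hαβ)) (map_add _)
    (fun k r => transpose_kSmul0 hβα r k) (transpose_balpha hβα)
    (balpha_leftRegular hgen hβ ⟨hαβ.injective, hβα.surjective⟩)
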